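/- Let 0 < p < ∞ and 0 < η < p/2. There is a constant c = c(p, η) > 0, depending only on p and η, such that for all z, w ∈ D, ∫_D (1 − |u|²)^{p−η} |1 − conj(z)u|^{−(2+p)} |1 − conj(w)u|^{−2} dm(u) ≤ c (1 − |z|²)^{−η} |1 − conj(w)z|^{−2}. -/

import Mathlib

open MeasureTheory Filter Topology Set
open scoped ENNReal

noncomputable section

/-- The open unit disk in `ℂ`. -/
def unitDisk : Set ℂ := Metric.ball 0 1

/-- The Möbius map `σ_w(z) = (w - z)/(1 - conj(w) z)`. -/
def mobiusMap (w z : ℂ) : ℂ := (w - z) / (1 - (starRingEnd ℂ) w * z)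

/-- The `Q_p` norm (extended-real valued):
`‖f‖_{Q_p} = |f(0)| + sup_{w ∈ D} (∫_D |f'(z)|² (1-|σ_w(z)|²)^p dm(z))^{1/2}`. -/
def qpNorm (p : ℝ) (f : ℂ → ℂ) : ℝ≥0∞ :=
  ENNReal.ofReal (‖f 0‖) +
    ⨆ w ∈ unitDisk,
      (∫⁻ z in unitDisk,
        ENNReal.ofReal (‖deriv f z‖ ^ 2 *
          (1 - ‖mobiusMap w z‖ ^ 2) ^ p)) ^ (1/2 : ℝ)

/-- The Carleson square `S(I)` over the subarc `I = {e^{it} : |t - θ| ≤ π h}` of the unit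
circle, of normalized arclength `h`: `S(I) = {r ξ : 1 - h ≤ r < 1, ξ ∈ I}`. -/
def carlesonSquare (θ h : ℝ) : Set ℂ :=
  {z : ℂ | ∃ r t : ℝ, 1 - h ≤ r ∧ r < 1 ∧ |t - θ| ≤ Real.pi * h ∧
    z = (r : ℂ) * Complex.exp (t * Complex.I)}

/-- The logarithmic Carleson quantity
`‖μ‖²_{LCM_p} = sup_{S(I) ⊆ D} μ(S(I)) |I|^{-p} (log(2/|I|))²`, defined for an arbitrary
set function `μ` (applied below to measures and to `μ_{p,g}`). -/
def lcmSup (p : ℝ) (μ : Set ℂ → ℝ≥0∞) : ℝ≥0∞ :=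
  ⨆ (θ : ℝ) (h : ℝ) (_ : h ∈ Set.Ioc (0:ℝ) 1),
    (μ (carlesonSquare θ h) *
      ENNReal.ofReal (h ^ (-p) * (Real.log (2 / h)) ^ 2)) ^ (1/2 : ℝ)

/-- The tent-space norm `‖f‖_{T^∞_p(μ)} = sup_{S(I) ⊆ D} (|I|^{-p} ∫_{S(I)} |f|² dμ)^{1/2}`. -/
def tentNorm (p : ℝ) (μ : Measure ℂ) (f : ℂ → ℂ) : ℝ≥0∞ :=
  ⨆ (θ : ℝ) (h : ℝ) (_ : h ∈ Set.Ioc (0:ℝ) 1),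
    (ENNReal.ofReal (h ^ (-p)) *
      ∫⁻ z in carlesonSquare θ h, ENNReal.ofReal (‖f z‖ ^ 2) ∂μ) ^ (1/2 : ℝ)

/-- The measure `dμ_{p,g}(z) = (1-|z|²)^p |g'(z)|² dm(z)`, as a set function. -/
def mupg (p : ℝ) (g : ℂ → ℂ) (E : Set ℂ) : ℝ≥0∞ :=
  ∫⁻ z in E, ENNReal.ofReal ((1 - ‖z‖ ^ 2) ^ p * ‖deriv g z‖ ^ 2)

/-- The Volterra operator `V_g f(z) = ∫₀^z g'(w) f(w) dw` (along the segment from `0` to `z`). -/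
def Vop (g f : ℂ → ℂ) : ℂ → ℂ :=
  fun z => z * ∫ t in (0:ℝ)..1, deriv g ((t : ℂ) * z) * f ((t : ℂ) * z)

/-- The operator `U_g f(z) = ∫₀^z g(w) f'(w) dw` (along the segment from `0` to `z`). -/
def Uop (g f : ℂ → ℂ) : ℂ → ℂ :=
  fun z => z * ∫ t in (0:ℝ)..1, g ((t : ℂ) * z) * deriv f ((t : ℂ) * z)

/-- The `D_p` (weighted Dirichlet) norm
`‖f‖_{D_p} = |f(0)| + (∫_D |f'(z)|² (1-|z|²)^p dm(z))^{1/2}`. -/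
def dpNorm (p : ℝ) (f : ℂ → ℂ) : ℝ≥0∞ :=
  ENNReal.ofReal (‖f 0‖) +
    (∫⁻ z in unitDisk,
      ENNReal.ofReal (‖deriv f z‖ ^ 2 * (1 - ‖z‖ ^ 2) ^ p)) ^ (1/2 : ℝ)

/-- The Carleson box with vertex `w`:
`S(w) = {z ∈ D : 1-|z| ≤ 1-|w|, |arg(w conj z)| ≤ π(1-|w|)}`. -/
def carlesonBox (w : ℂ) : Set ℂ :=
  {z : ℂ | ‖z‖ < 1 ∧ 1 - ‖z‖ ≤ 1 - ‖w‖ ∧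
    |Complex.arg (w * (starRingEnd ℂ) z)| ≤ Real.pi * (1 - ‖w‖)}

/-- The heightened Carleson box with vertex `w`:
`S̃(w) = {z ∈ D : 1-|z| ≤ 2(1-|w|), |arg(w conj z)| ≤ π(1-|w|)}`. -/
def carlesonBoxT (w : ℂ) : Set ℂ :=
  {z : ℂ | ‖z‖ < 1 ∧ 1 - ‖z‖ ≤ 2 * (1 - ‖w‖) ∧
    |Complex.arg (w * (starRingEnd ℂ) z)| ≤ Real.pi * (1 - ‖w‖)}

/-!
Put `δ = |1 - w̄z| / 2`. By `|1 - w̄z| ≤ |1 - w̄u| + |1 - z̄u|`, every `u ∈ D` has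
`|1 - w̄u| ≥ δ` or `|1 - z̄u| ≥ δ`. Since `1 - |u|² ≤ 2 |1 - āu|` for `a ∈ D`, the integrand is
at most `2^(p-η) δ^(-2) |1 - z̄u|^(-(2+η))` on the first region and
`2^(p-η) δ^(-(2+p)) |1 - w̄u|^(p-η-2)` on the second. The sublevel sets
`{u ∈ D : |1 - āu| ≤ R}` lie in the disc of radius `R` about `a`, so summing over dyadic shells
bounds the two remaining integrals by `(1 - |z|²)^(-η)` and `δ^(p-η)` up to constants; finally
`δ ≥ (1 - |z|²)/4`.
-/

open ComplexConjugate Metric Real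

section DiskGeometry

variable {z w u : ℂ}

theorem norm_one_sub_conj_mul_comm (z u : ℂ) : ‖1 - conj z * u‖ = ‖1 - conj u * z‖ := by
  rw [← Complex.norm_conj]
  simp [mul_comm]

theorem one_sub_norm_mul_norm_le (z u : ℂ) : 1 - ‖z‖ * ‖u‖ ≤ ‖1 - conj z * u‖ := by
  simpa [Complex.norm_conj] using norm_sub_norm_le (1 : ℂ) (conj z * u)

theorem one_sub_sq_norm_le_two_mul (hz : ‖z‖ ≤ 1) : 1 - ‖u‖ ^ 2 ≤ 2 * ‖1 - conj z * u‖ := by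
  nlinarith [one_sub_norm_mul_norm_le z u, norm_nonneg u, sq_nonneg (1 - ‖u‖)]

theorem norm_one_sub_conj_mul_pos (hz : ‖z‖ < 1) (hu : ‖u‖ ≤ 1) : 0 < ‖1 - conj z * u‖ := by
  nlinarith [one_sub_norm_mul_norm_le z u, norm_nonneg z]

theorem norm_sub_le_norm_one_sub_conj_mul (hz : ‖z‖ ≤ 1) (hu : ‖u‖ ≤ 1) :
    ‖u - z‖ ≤ ‖1 - conj z * u‖ := by
  have key : Complex.normSq (1 - conj z * u) - Complex.normSq (u - z) =
      (1 - Complex.normSq z) * (1 - Complex.normSq u) := by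
    simp only [Complex.normSq_apply, Complex.sub_re, Complex.sub_im, Complex.one_re,
      Complex.one_im, Complex.mul_re, Complex.mul_im, Complex.conj_re, Complex.conj_im]
    ring
  rw [← Complex.sq_norm, ← Complex.sq_norm, ← Complex.sq_norm, ← Complex.sq_norm] at key
  refine (pow_le_pow_iff_left₀ (norm_nonneg _) (norm_nonneg _) two_ne_zero).1 ?_
  nlinarith [mul_nonneg (sub_nonneg.2 (pow_le_one₀ (n := 2) (norm_nonneg z) hz))
    (sub_nonneg.2 (pow_le_one₀ (n := 2) (norm_nonneg u) hu))]

theorem norm_one_sub_conj_mul_le_add (hz : ‖z‖ ≤ 1) (hw : ‖w‖ ≤ 1) (hu : ‖u‖ ≤ 1) :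
    ‖1 - conj w * z‖ ≤ ‖1 - conj w * u‖ + ‖1 - conj z * u‖ :=
  calc ‖1 - conj w * z‖ = ‖(1 - conj w * u) + conj w * (u - z)‖ := by ring_nf
    _ ≤ ‖1 - conj w * u‖ + ‖u - z‖ := by
      grw [norm_add_le, norm_mul, Complex.norm_conj, hw, one_mul]
    _ ≤ ‖1 - conj w * u‖ + ‖1 - conj z * u‖ := by
      grw [norm_sub_le_norm_one_sub_conj_mul hz hu]

theorem volume_inter_setOf_norm_one_sub_conj_mul_le {S : Set ℂ} (hS : S ⊆ closedBall 0 1)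
    (hz : ‖z‖ ≤ 1) {R : ℝ} (hR : 0 ≤ R) :
    volume (S ∩ {u | ‖1 - conj z * u‖ ≤ R}) ≤ ENNReal.ofReal (π * R ^ (2 : ℝ)) := by
  have hsub : S ∩ {u | ‖1 - conj z * u‖ ≤ R} ⊆ closedBall z R := fun u ⟨huS, huR⟩ =>
    mem_closedBall_iff_norm.2
      ((norm_sub_le_norm_one_sub_conj_mul hz (mem_closedBall_zero_iff.1 (hS huS))).trans huR)
  grw [hsub, Complex.volume_closedBall, Real.rpow_two, ENNReal.ofReal_mul pi_pos.le,
    ENNReal.ofReal_pow hR, mul_comm, ← ENNReal.ofReal_coe_nnreal, NNReal.coe_real_pi]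

end DiskGeometry

section DyadicShells

variable {α : Type*} [MeasurableSpace α] {μ : Measure α}

theorem setLIntegral_le_tsum_mul_measure {ι : Type*} [Countable ι] {S : Set α} {U : ι → Set α}
    {f : α → ℝ≥0∞} {c : ι → ℝ≥0∞} (hS : S ⊆ ⋃ k, U k) (hf : ∀ k, ∀ x ∈ U k, f x ≤ c k) :
    ∫⁻ x in S, f x ∂μ ≤ ∑' k, c k * μ (U k) :=
  calc ∫⁻ x in S, f x ∂μ ≤ ∫⁻ x in ⋃ k, U k, f x ∂μ := lintegral_mono_set hS
    _ ≤ ∑' k, ∫⁻ x in U k, f x ∂μ := lintegral_iUnion_le U f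
    _ ≤ ∑' k, c k * μ (U k) := ENNReal.tsum_le_tsum fun k =>
      (setLIntegral_mono measurable_const (hf k)).trans_eq (setLIntegral_const _ _)

theorem tsum_ofReal_mul_geometric {A r : ℝ} (hA : 0 ≤ A) (hr₀ : 0 ≤ r) (hr₁ : r < 1) :
    ∑' k : ℕ, ENNReal.ofReal (A * r ^ k) = ENNReal.ofReal (A / (1 - r)) := by
  rw [← ENNReal.ofReal_tsum_of_nonneg (fun k => by positivity)
    ((summable_geometric_of_lt_one hr₀ hr₁).mul_left A), tsum_mul_left,
    tsum_geometric_of_lt_one hr₀ hr₁, div_eq_mul_inv]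

theorem two_rpow_neg_lt_one {s : ℝ} (hs : 0 < s) : (2 : ℝ) ^ (-s) < 1 :=
  rpow_lt_one_of_one_lt_of_neg one_lt_two (neg_neg_of_pos hs)

variable {S : Set α} {φ : α → ℝ} {a C : ℝ}

/-- Sum over the dyadic shells `2 ^ k d ≤ φ ≤ 2 ^ (k + 1) d`. -/
theorem setLIntegral_rpow_neg_le_of_measure_le {s d : ℝ} (ha : 0 ≤ a) (hs : 0 < s) (hd : 0 < d)
    (hC : 0 ≤ C) (hφ : ∀ x ∈ S, d ≤ φ x)
    (hμ : ∀ R > 0, μ (S ∩ {x | φ x ≤ R}) ≤ ENNReal.ofReal (C * R ^ a)) :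
    ∫⁻ x in S, ENNReal.ofReal (φ x ^ (-(a + s))) ∂μ ≤
      ENNReal.ofReal (2 ^ a * C / (1 - 2 ^ (-s)) * d ^ (-s)) := by
  set U : ℕ → Set α := fun k => {x ∈ S | 2 ^ k * d ≤ φ x ∧ φ x ≤ 2 * (2 ^ k * d)}
  have hcover : S ⊆ ⋃ k, U k := fun x hx => by
    obtain ⟨k, hk₁, hk₂⟩ := exists_nat_pow_near ((one_le_div hd).2 (hφ x hx)) one_lt_two
    rw [le_div_iff₀ hd] at hk₁
    rw [div_lt_iff₀ hd, pow_succ, mul_comm _ (2 : ℝ), mul_assoc] at hk₂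
    exact mem_iUnion.2 ⟨k, hx, hk₁, hk₂.le⟩
  have hvalue : ∀ k, ∀ x ∈ U k, ENNReal.ofReal (φ x ^ (-(a + s))) ≤
      ENNReal.ofReal ((2 ^ k * d) ^ (-(a + s))) := fun k x hx =>
    ENNReal.ofReal_le_ofReal (rpow_le_rpow_of_nonpos (by positivity) hx.2.1 (by linarith))
  have hterm : ∀ k : ℕ, (2 ^ k * d) ^ (-(a + s)) * (C * (2 * (2 ^ k * d)) ^ a) =
      2 ^ a * C * d ^ (-s) * (2 ^ (-s)) ^ k := fun k => by
    have hx : (0 : ℝ) < 2 ^ k * d := by positivity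
    have hsplit : (2 ^ k * d) ^ (-(a + s)) = (2 ^ k * d) ^ (-s) * (2 ^ k * d) ^ (-a) := by
      rw [← rpow_add hx]
      ring_nf
    rw [mul_rpow zero_le_two hx.le, hsplit, mul_rpow (by positivity) hd.le,
      ← rpow_pow_comm zero_le_two, rpow_neg hx.le]
    field_simp
  calc ∫⁻ x in S, ENNReal.ofReal (φ x ^ (-(a + s))) ∂μ
      ≤ ∑' k, ENNReal.ofReal ((2 ^ k * d) ^ (-(a + s))) * μ (U k) :=
        setLIntegral_le_tsum_mul_measure hcover hvalue
    _ ≤ ∑' k : ℕ, ENNReal.ofReal (2 ^ a * C * d ^ (-s) * (2 ^ (-s)) ^ k) :=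
        ENNReal.tsum_le_tsum fun k => by
          conv_rhs => rw [← hterm, ENNReal.ofReal_mul (by positivity)]
          grw [← hμ _ (by positivity)]
          gcongr
          exact fun x hx => ⟨hx.1, hx.2.2⟩
    _ = ENNReal.ofReal (2 ^ a * C / (1 - 2 ^ (-s)) * d ^ (-s)) := by
        rw [tsum_ofReal_mul_geometric (by positivity) (by positivity) (two_rpow_neg_lt_one hs)]
        ring_nf

/-- Sum over the dyadic shells `δ / 2 ^ (k + 1) ≤ φ ≤ δ / 2 ^ k`. -/
theorem setLIntegral_rpow_sub_le_of_measure_le {t δ : ℝ} (ha : 0 ≤ a) (ht : 0 < t) (hδ : 0 < δ)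
    (hC : 0 ≤ C) (hφ : ∀ x ∈ S, 0 < φ x ∧ φ x ≤ δ)
    (hμ : ∀ R > 0, μ (S ∩ {x | φ x ≤ R}) ≤ ENNReal.ofReal (C * R ^ a)) :
    ∫⁻ x in S, ENNReal.ofReal (φ x ^ (t - a)) ∂μ ≤
      ENNReal.ofReal (2 ^ a * C / (1 - 2 ^ (-t)) * δ ^ t) := by
  set U : ℕ → Set α := fun k => {x ∈ S | 2⁻¹ * (2⁻¹ ^ k * δ) ≤ φ x ∧ φ x ≤ 2⁻¹ ^ k * δ}
  have hcover : S ⊆ ⋃ k, U k := fun x hx => by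
    obtain ⟨hφ₀, hφδ⟩ := hφ x hx
    obtain ⟨k, hk₁, hk₂⟩ := exists_nat_pow_near_of_lt_one (div_pos hφ₀ hδ)
      ((div_le_one hδ).2 hφδ) (by norm_num : (0 : ℝ) < 2⁻¹) (by norm_num)
    rw [lt_div_iff₀ hδ, pow_succ, mul_comm _ (2⁻¹ : ℝ), mul_assoc] at hk₁
    rw [div_le_iff₀ hδ] at hk₂
    exact mem_iUnion.2 ⟨k, hx, hk₁.le, hk₂⟩
  have hvalue : ∀ k, ∀ x ∈ U k, ENNReal.ofReal (φ x ^ (t - a)) ≤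
      ENNReal.ofReal ((2⁻¹ ^ k * δ) ^ t * (2⁻¹ * (2⁻¹ ^ k * δ)) ^ (-a)) := fun k x hx => by
    have hφ₀ := (hφ x hx.1).1
    rw [sub_eq_add_neg, rpow_add hφ₀]
    exact ENNReal.ofReal_le_ofReal (mul_le_mul (rpow_le_rpow hφ₀.le hx.2.2 ht.le)
      (rpow_le_rpow_of_nonpos (by positivity) hx.2.1 (by linarith)) (by positivity)
      (by positivity))
  have hterm : ∀ k : ℕ,
      (2⁻¹ ^ k * δ) ^ t * (2⁻¹ * (2⁻¹ ^ k * δ)) ^ (-a) * (C * (2⁻¹ ^ k * δ) ^ a) =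
        2 ^ a * C * δ ^ t * (2 ^ (-t)) ^ k := fun k => by
    have hx : (0 : ℝ) < 2⁻¹ ^ k * δ := by positivity
    rw [mul_rpow (by norm_num) hx.le, rpow_neg hx.le, inv_rpow zero_le_two, rpow_neg zero_le_two,
      mul_rpow (by positivity) hδ.le, ← rpow_pow_comm (by norm_num), inv_rpow zero_le_two,
      rpow_neg zero_le_two, mul_rpow (by positivity) hδ.le, ← rpow_pow_comm (by norm_num),
      inv_rpow zero_le_two]
    field_simp
  calc ∫⁻ x in S, ENNReal.ofReal (φ x ^ (t - a)) ∂μ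
      ≤ ∑' k, ENNReal.ofReal ((2⁻¹ ^ k * δ) ^ t * (2⁻¹ * (2⁻¹ ^ k * δ)) ^ (-a)) * μ (U k) :=
        setLIntegral_le_tsum_mul_measure hcover hvalue
    _ ≤ ∑' k : ℕ, ENNReal.ofReal (2 ^ a * C * δ ^ t * (2 ^ (-t)) ^ k) :=
        ENNReal.tsum_le_tsum fun k => by
          conv_rhs => rw [← hterm, ENNReal.ofReal_mul (by positivity)]
          grw [← hμ _ (by positivity)]
          gcongr
          exact fun x hx => ⟨hx.1, hx.2.2⟩
    _ = ENNReal.ofReal (2 ^ a * C / (1 - 2 ^ (-t)) * δ ^ t) := by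
        rw [tsum_ofReal_mul_geometric (by positivity) (by positivity) (two_rpow_neg_lt_one ht)]
        ring_nf

end DyadicShells

theorem rpow_mul_rpow_neg_mul_rpow_neg_le {W X Y δ q r s : ℝ} (hW : 0 ≤ W) (hX : 0 < X)
    (hWX : W ≤ 2 * X) (hδ : 0 < δ) (hδY : δ ≤ Y) (hq : 0 ≤ q) (hr : 0 ≤ r) :
    W ^ q * X ^ (-s) * Y ^ (-r) ≤ 2 ^ q * δ ^ (-r) * X ^ (q - s) :=
  calc W ^ q * X ^ (-s) * Y ^ (-r) ≤ (2 * X) ^ q * X ^ (-s) * δ ^ (-r) := by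
        refine mul_le_mul (mul_le_mul_of_nonneg_right (rpow_le_rpow hW hWX hq) (by positivity))
          (rpow_le_rpow_of_nonpos hδ hδY (neg_nonpos.2 hr))
          (rpow_nonneg (hδ.le.trans hδY) _) (by positivity)
    _ = 2 ^ q * δ ^ (-r) * X ^ (q - s) := by
        rw [mul_rpow zero_le_two hX.le, sub_eq_add_neg, rpow_add hX]
        ring

def forelliRudinKernel (p η : ℝ) (z w u : ℂ) : ℝ :=
  (1 - ‖u‖ ^ 2) ^ (p - η) * ‖1 - conj z * u‖ ^ (-(2 + p)) * ‖1 - conj w * u‖ ^ (-2 : ℝ)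

section ForelliRudinKernel

variable {p η : ℝ} {z w : ℂ}

theorem measurableSet_setOf_le_norm_one_sub_conj_mul (w : ℂ) (δ : ℝ) :
    MeasurableSet {u : ℂ | δ ≤ ‖1 - conj w * u‖} :=
  measurableSet_le measurable_const (by fun_prop)

theorem lintegral_forelliRudinKernel_far_le (hz : ‖z‖ < 1) (hw : ‖w‖ < 1) (hη : 0 < η)
    (hq : 0 ≤ p - η) :
    ∫⁻ u in unitDisk ∩ {u | ‖1 - conj w * z‖ / 2 ≤ ‖1 - conj w * u‖},
        ENNReal.ofReal (forelliRudinKernel p η z w u) ≤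
      ENNReal.ofReal (2 ^ (p - η) * (‖1 - conj w * z‖ / 2) ^ (-2 : ℝ) *
        (2 ^ (2 : ℝ) * π / (1 - 2 ^ (-η)) * ((1 - ‖z‖ ^ 2) / 4) ^ (-η))) := by
  set δ := ‖1 - conj w * z‖ / 2
  set S := unitDisk ∩ {u | δ ≤ ‖1 - conj w * u‖}
  have hδ : 0 < δ := half_pos (norm_one_sub_conj_mul_pos hw hz.le)
  have hS : MeasurableSet S :=
    isOpen_ball.measurableSet.inter (measurableSet_setOf_le_norm_one_sub_conj_mul w δ)
  calc ∫⁻ u in S, ENNReal.ofReal (forelliRudinKernel p η z w u)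
      ≤ ∫⁻ u in S, ENNReal.ofReal (2 ^ (p - η) * δ ^ (-2 : ℝ)) *
          ENNReal.ofReal (‖1 - conj z * u‖ ^ (-(2 + η))) :=
        setLIntegral_mono' hS fun u ⟨hu, huδ⟩ => by
          have hu1 : ‖u‖ < 1 := mem_ball_zero_iff.1 hu
          rw [← ENNReal.ofReal_mul (by positivity), forelliRudinKernel,
            show -(2 + η) = p - η - (2 + p) by ring]
          exact ENNReal.ofReal_le_ofReal (rpow_mul_rpow_neg_mul_rpow_neg_le
            (by nlinarith [norm_nonneg u]) (norm_one_sub_conj_mul_pos hz hu1.le)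
            (one_sub_sq_norm_le_two_mul hz.le) hδ huδ hq zero_le_two)
    _ = ENNReal.ofReal (2 ^ (p - η) * δ ^ (-2 : ℝ)) *
          ∫⁻ u in S, ENNReal.ofReal (‖1 - conj z * u‖ ^ (-(2 + η))) :=
        lintegral_const_mul' _ _ ENNReal.ofReal_ne_top
    _ ≤ _ := by
        rw [ENNReal.ofReal_mul (by positivity : (0 : ℝ) ≤ 2 ^ (p - η) * δ ^ (-2 : ℝ))]
        gcongr
        refine setLIntegral_rpow_neg_le_of_measure_le zero_le_two hη
          (by nlinarith [norm_nonneg z]) pi_pos.le (fun u ⟨hu, _⟩ => ?_) fun R hR =>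
          volume_inter_setOf_norm_one_sub_conj_mul_le
            (inter_subset_left.trans ball_subset_closedBall) hz.le hR.le
        have := one_sub_sq_norm_le_two_mul (u := z) (mem_ball_zero_iff.1 hu).le
        rw [← norm_one_sub_conj_mul_comm] at this
        linarith [norm_nonneg (1 - conj z * u)]

theorem lintegral_forelliRudinKernel_near_le (hz : ‖z‖ < 1) (hw : ‖w‖ < 1) (hη : 0 < η)
    (hq : 0 < p - η) :
    ∫⁻ u in unitDisk \ {u | ‖1 - conj w * z‖ / 2 ≤ ‖1 - conj w * u‖},
        ENNReal.ofReal (forelliRudinKernel p η z w u) ≤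
      ENNReal.ofReal (2 ^ (p - η) * (‖1 - conj w * z‖ / 2) ^ (-2 : ℝ) *
        (2 ^ (2 : ℝ) * π / (1 - 2 ^ (-(p - η))) * ((1 - ‖z‖ ^ 2) / 4) ^ (-η))) := by
  set δ := ‖1 - conj w * z‖ / 2 with hδ_def
  set S := unitDisk \ {u | δ ≤ ‖1 - conj w * u‖}
  set M : ℝ := 2 ^ (2 : ℝ) * π / (1 - 2 ^ (-(p - η)))
  have hδ : 0 < δ := half_pos (norm_one_sub_conj_mul_pos hw hz.le)
  have hS : MeasurableSet S :=
    isOpen_ball.measurableSet.diff (measurableSet_setOf_le_norm_one_sub_conj_mul w δ)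
  calc ∫⁻ u in S, ENNReal.ofReal (forelliRudinKernel p η z w u)
      ≤ ∫⁻ u in S, ENNReal.ofReal (2 ^ (p - η) * δ ^ (-(2 + p))) *
          ENNReal.ofReal (‖1 - conj w * u‖ ^ (p - η - 2)) :=
        setLIntegral_mono' hS fun u ⟨hu, huδ⟩ => by
          have hu1 : ‖u‖ < 1 := mem_ball_zero_iff.1 hu
          have hδz : δ ≤ ‖1 - conj z * u‖ := by
            have := norm_one_sub_conj_mul_le_add hz.le hw.le hu1.le
            simp only [mem_ofPred_eq, not_le] at huδ
            linarith
          rw [← ENNReal.ofReal_mul (by positivity), forelliRudinKernel, mul_right_comm]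
          exact ENNReal.ofReal_le_ofReal (rpow_mul_rpow_neg_mul_rpow_neg_le
            (by nlinarith [norm_nonneg u]) (norm_one_sub_conj_mul_pos hw hu1.le)
            (one_sub_sq_norm_le_two_mul hw.le) hδ hδz hq.le (by linarith))
    _ = ENNReal.ofReal (2 ^ (p - η) * δ ^ (-(2 + p))) *
          ∫⁻ u in S, ENNReal.ofReal (‖1 - conj w * u‖ ^ (p - η - 2)) :=
        lintegral_const_mul' _ _ ENNReal.ofReal_ne_top
    _ ≤ ENNReal.ofReal (2 ^ (p - η) * δ ^ (-(2 + p))) *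
          ENNReal.ofReal (M * δ ^ (p - η)) := by
        gcongr
        exact setLIntegral_rpow_sub_le_of_measure_le zero_le_two hq hδ pi_pos.le
          (fun u ⟨hu, huδ⟩ => ⟨norm_one_sub_conj_mul_pos hw (mem_ball_zero_iff.1 hu).le,
            (not_le.1 huδ).le⟩)
          fun R hR => volume_inter_setOf_norm_one_sub_conj_mul_le
            (sdiff_subset.trans ball_subset_closedBall) hw.le hR.le
    _ ≤ _ := by
        rw [← ENNReal.ofReal_mul (by positivity)]
        apply ENNReal.ofReal_le_ofReal
        have hM : 0 ≤ M := div_nonneg (by positivity) (sub_nonneg.2 (two_rpow_neg_lt_one hq).le)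
        have hρ : 0 < (1 - ‖z‖ ^ 2) / 4 := by nlinarith [norm_nonneg z]
        have hρδ : (1 - ‖z‖ ^ 2) / 4 ≤ δ := by
          linarith [one_sub_sq_norm_le_two_mul (u := z) hw.le]
        have hsplit : δ ^ (-(2 + p)) * δ ^ (p - η) = δ ^ (-2 : ℝ) * δ ^ (-η) := by
          rw [← rpow_add hδ, ← rpow_add hδ]
          ring_nf
        calc 2 ^ (p - η) * δ ^ (-(2 + p)) * (M * δ ^ (p - η))
            = 2 ^ (p - η) * δ ^ (-2 : ℝ) * (M * δ ^ (-η)) := by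
              linear_combination 2 ^ (p - η) * M * hsplit
          _ ≤ _ := mul_le_mul_of_nonneg_left (mul_le_mul_of_nonneg_left
              (rpow_le_rpow_of_nonpos hρ hρδ (by linarith)) hM) (by positivity)

end ForelliRudinKernel

theorem forelli_rudin_type_estimate_general (p η : ℝ) (hη : 0 < η) (hηp : η < p / 2) :
    ∃ c : ℝ, 0 < c ∧ ∀ z ∈ unitDisk, ∀ w ∈ unitDisk,
      (∫⁻ u in unitDisk,
        ENNReal.ofReal
          ((1 - ‖u‖ ^ 2) ^ (p - η) *
            (‖1 - (starRingEnd ℂ) z * u‖) ^ (-(2 + p)) *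
            (‖1 - (starRingEnd ℂ) w * u‖) ^ (-2 : ℝ))) ≤
        ENNReal.ofReal
          (c * (1 - ‖z‖ ^ 2) ^ (-η) *
            (‖1 - (starRingEnd ℂ) w * z‖) ^ (-2 : ℝ)) := by
  have hq : 0 < p - η := by linarith
  set M₁ := 2 ^ (2 : ℝ) * π / (1 - 2 ^ (-η))
  set M₂ := 2 ^ (2 : ℝ) * π / (1 - 2 ^ (-(p - η)))
  have hM₁ : 0 < M₁ := div_pos (by positivity) (sub_pos.2 (two_rpow_neg_lt_one hη))
  have hM₂ : 0 < M₂ := div_pos (by positivity) (sub_pos.2 (two_rpow_neg_lt_one hq))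
  refine ⟨2 ^ (p - η) * (M₁ + M₂) * 4 * 4 ^ η, by positivity, fun z hz w hw => ?_⟩
  change ∫⁻ u in unitDisk, ENNReal.ofReal (forelliRudinKernel p η z w u) ≤ _
  have hz1 : ‖z‖ < 1 := mem_ball_zero_iff.1 hz
  have hw1 : ‖w‖ < 1 := mem_ball_zero_iff.1 hw
  have hD : 0 < 1 - ‖z‖ ^ 2 := by nlinarith [norm_nonneg z]
  have hK : 0 < ‖1 - conj w * z‖ := norm_one_sub_conj_mul_pos hw1 hz1.le
  rw [← lintegral_inter_add_sdiff _ _ (measurableSet_setOf_le_norm_one_sub_conj_mul w _)]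
  grw [lintegral_forelliRudinKernel_far_le hz1 hw1 hη hq.le,
    lintegral_forelliRudinKernel_near_le hz1 hw1 hη hq,
    ← ENNReal.ofReal_add (by positivity) (by positivity)]
  refine ENNReal.ofReal_le_ofReal (le_of_eq ?_)
  rw [div_rpow hK.le zero_le_two, div_rpow hD.le zero_le_four, rpow_neg zero_le_two,
    rpow_neg zero_le_four]
  field_simp
  ring

/-- The weighted integral estimate: for `0 < η < p/2` there is `c = c(p,η) > 0` with
`∫_D (1-|u|²)^{p-η} |1 - conj(z)u|^{-(2+p)} |1 - conj(w)u|^{-2} dm(u)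
  ≤ c (1-|z|²)^{-η} |1 - conj(w)z|^{-2}` for all `z, w ∈ D`. -/
theorem forelli_rudin_type_estimate (p η : ℝ) (hp : 0 < p) (hη : 0 < η) (hηp : η < p / 2) :
    ∃ c : ℝ, 0 < c ∧ ∀ z ∈ unitDisk, ∀ w ∈ unitDisk,
      (∫⁻ u in unitDisk,
        ENNReal.ofReal
          ((1 - ‖u‖ ^ 2) ^ (p - η) *
            (‖1 - (starRingEnd ℂ) z * u‖) ^ (-(2 + p)) *
            (‖1 - (starRingEnd ℂ) w * u‖) ^ (-2 : ℝ))) ≤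
        ENNReal.ofReal
          (c * (1 - ‖z‖ ^ 2) ^ (-η) *
            (‖1 - (starRingEnd ℂ) w * z‖) ^ (-2 : ℝ)) :=
  forelli_rudin_type_estimate_general p η hη hηp
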